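/- arXiv:1710.08375 — 3 statements merged into one kernel-verified Lean document; each statement's English description precedes it below -/
import Mathlib

section
/- For any nonnegative kernel K, the first moment sum_{j=0}^N j * c_j^N(t) of a solution of the truncated EDG system is constant in time. -/
open Finset

/-- `∑_{k=0}^{N-1} K(j,k) c_k` -/
noncomputable def truncS (K : ℕ → ℕ → ℝ) (N : ℕ) (c : ℕ → ℝ) (j : ℕ) : ℝ :=
  ∑ k ∈ Finset.range N, K j k * c k

/-- `∑_{k=1}^{N} K(k,j) c_k` -/
noncomputable def truncSbar (K : ℕ → ℕ → ℝ) (N : ℕ) (c : ℕ → ℝ) (j : ℕ) : ℝ :=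
  ∑ k ∈ Finset.Icc 1 N, K k j * c k

/-- The truncated exchange-driven growth ODE system of size `N`, on a set `s` of times. -/
def IsTruncEDGSol (K : ℕ → ℕ → ℝ) (N : ℕ) (c : ℕ → ℝ → ℝ) (s : Set ℝ) : Prop :=
  ∀ t ∈ s,
    HasDerivAt (c 0)
      (c 1 t * truncS K N (fun k => c k t) 1
        - c 0 t * truncSbar K N (fun k => c k t) 0) t ∧
    (∀ j, 1 ≤ j → j ≤ N - 1 →
      HasDerivAt (c j)
        (c (j+1) t * truncS K N (fun k => c k t) (j+1)
          - c j t * truncS K N (fun k => c k t) j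
          - c j t * truncSbar K N (fun k => c k t) j
          + c (j-1) t * truncSbar K N (fun k => c k t) (j-1)) t) ∧
    HasDerivAt (c N)
      (- c N t * truncS K N (fun k => c k t) N
        + c (N-1) t * truncSbar K N (fun k => c k t) (N-1)) t

theorem truncated_first_moment_conserved
    (K : ℕ → ℕ → ℝ) (N : ℕ) (hN : 1 ≤ N)
    (hKnn : ∀ j k, 0 ≤ K j k) (hK0 : ∀ j, K 0 j = 0)
    (c : ℕ → ℝ → ℝ) (hsol : IsTruncEDGSol K N c Set.univ) (t : ℝ) :
    ∑ j ∈ Finset.range (N + 1), (j : ℝ) * c j t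
      = ∑ j ∈ Finset.range (N + 1), (j : ℝ) * c j 0 := by
  obtain ⟨M, rfl⟩ : ∃ M, N = M + 1 := ⟨N - 1, (Nat.succ_pred_eq_of_pos hN).symm⟩
  have key : ∀ u : ℝ,
      HasDerivAt (fun v => ∑ j ∈ Finset.range (M + 1 + 1), (j : ℝ) * c j v) 0 u := by
    intro u
    obtain ⟨h0, hmid, hlast⟩ := hsol u (Set.mem_univ u)
    set b : ℕ → ℝ := fun k => c k u with hb
    set S : ℕ → ℝ := truncS K (M + 1) b with hS
    set Sb : ℕ → ℝ := truncSbar K (M + 1) b with hSb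
    set d : ℕ → ℝ := fun j =>
      if j = 0 then b 1 * S 1 - b 0 * Sb 0
      else if j = M + 1 then -b (M + 1) * S (M + 1) + b M * Sb M
      else b (j + 1) * S (j + 1) - b j * S j - b j * Sb j + b (j - 1) * Sb (j - 1)
        with hd
    have hderiv : ∀ j ∈ Finset.range (M + 1 + 1), HasDerivAt (c j) (d j) u := by
      intro j hj
      rcases Nat.eq_zero_or_pos j with rfl | hj1
      · simpa [hd] using h0
      rcases eq_or_ne j (M + 1) with rfl | hjM
      · have := hlast
        simp only [Nat.add_sub_cancel] at this
        simpa [hd] using this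
      · have hjle : j ≤ M := by
          have := Finset.mem_range.mp hj
          omega
        have := hmid j hj1 (by simpa using hjle)
        have hne0 : j ≠ 0 := by omega
        simpa [hd, hne0, hjM] using this
    have hsum : HasDerivAt (fun v => ∑ j ∈ Finset.range (M + 1 + 1), (j : ℝ) * c j v)
        (∑ j ∈ Finset.range (M + 1 + 1), (j : ℝ) * d j) u :=
      HasDerivAt.fun_sum fun j hj => (hderiv j hj).const_mul _
    have hzero : (∑ j ∈ Finset.range (M + 1 + 1), (j : ℝ) * d j) = 0 := by
      have hswap : ∑ i ∈ Finset.range (M + 1), b i * Sb i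
          = ∑ i ∈ Finset.range (M + 1), b (i + 1) * S (i + 1) := by
        have l1 : ∑ i ∈ Finset.range (M + 1), b i * Sb i
            = ∑ i ∈ Finset.range (M + 1), ∑ k ∈ Finset.range (M + 1),
                K (k + 1) i * b (k + 1) * b i := by
          refine Finset.sum_congr rfl fun i _ => ?_
          rw [hSb]
          unfold truncSbar
          rw [← Finset.Ico_add_one_right_eq_Icc, Finset.sum_Ico_eq_sum_range, Finset.mul_sum]
          refine Finset.sum_congr (by norm_num) fun k _ => ?_
          rw [add_comm 1 k]
          ring
        have l2 : ∑ i ∈ Finset.range (M + 1), b (i + 1) * S (i + 1)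
            = ∑ i ∈ Finset.range (M + 1), ∑ k ∈ Finset.range (M + 1),
                K (i + 1) k * b (i + 1) * b k := by
          refine Finset.sum_congr rfl fun i _ => ?_
          rw [hS]
          unfold truncS
          rw [Finset.mul_sum]
          refine Finset.sum_congr rfl fun k _ => ?_
          ring
        rw [l1, l2, Finset.sum_comm]
      rw [Finset.sum_range_succ, Finset.sum_range_succ']
      have hmidval : ∀ i ∈ Finset.range M,
          ((i + 1 : ℕ) : ℝ) * d (i + 1)
            = (((i + 1 : ℕ) : ℝ) * b (i + 1 + 1) * S (i + 1 + 1)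
                - ((i : ℕ) : ℝ) * b (i + 1) * S (i + 1))
              - b (i + 1) * S (i + 1)
              - (((i + 1 : ℕ) : ℝ) * b (i + 1) * Sb (i + 1)
                  - ((i : ℕ) : ℝ) * b i * Sb i)
              + b i * Sb i := by
        intro i hi
        have hiM : i < M := Finset.mem_range.mp hi
        have h1 : i + 1 ≠ 0 := by omega
        have h2 : i + 1 ≠ M + 1 := by omega
        simp only [hd, h1, h2, if_false, Nat.add_sub_cancel]
        push_cast
        ring
      rw [Finset.sum_congr rfl hmidval]
      have hDM : d (M + 1) = -b (M + 1) * S (M + 1) + b M * Sb M := by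
        simp [hd]
      rw [hDM]
      simp only [Finset.sum_add_distrib, Finset.sum_sub_distrib]
      have T1 := Finset.sum_range_sub (fun i => ((i : ℕ) : ℝ) * b (i + 1) * S (i + 1)) M
      have T2 := Finset.sum_range_sub (fun i => ((i : ℕ) : ℝ) * b i * Sb i) M
      simp only [Finset.sum_sub_distrib] at T1 T2
      rw [Finset.sum_range_succ] at hswap
      rw [show ∑ i ∈ Finset.range (M + 1), b (i + 1) * S (i + 1)
            = ∑ i ∈ Finset.range M, b (i + 1) * S (i + 1) + b (M + 1) * S (M + 1)
          from Finset.sum_range_succ _ M] at hswap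
      push_cast at T1 T2 ⊢
      linarith [hswap, T1, T2]
    rw [← hzero]
    exact hsum
  have hconst : ∀ x y : ℝ,
      (fun v => ∑ j ∈ Finset.range (M + 1 + 1), (j : ℝ) * c j v) x
        = (fun v => ∑ j ∈ Finset.range (M + 1 + 1), (j : ℝ) * c j v) y := by
    intro x y
    exact is_const_of_deriv_eq_zero (fun v => (key v).differentiableAt)
      (fun v => (key v).deriv) x y
  exact hconst t 0
end

section
/- Suppose K is symmetric on positive arguments (K(j,k) = K(k,j) for j,k >= 1), nonnegative, K(0,j)=0, and satisfies K(j,k) <= C(j^mu k^nu + j^nu k^mu) for all j,k >= 1 with mu, nu <= 2 and mu + nu <= 3. Then any solution of the truncated EDG system of size N with nonnegative initial data satisfies the a priori bound M_2^N(t) <= M_2^N(0) * exp(C' * M_1^N(0) * t) for an explicit constant C' depending only on C, where M_p^N(t) = sum_{j=0}^N j^p c_j^N(t). -/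
open Finset
open Topology Filter

noncomputable def Frhs (K : ℕ → ℕ → ℝ) (N : ℕ) (c : ℕ → ℝ → ℝ) (j : ℕ) (t : ℝ) : ℝ :=
  if j = 0 then
    c 1 t * truncS K N (fun k => c k t) 1 - c 0 t * truncSbar K N (fun k => c k t) 0
  else if j = N then
    - c N t * truncS K N (fun k => c k t) N + c (N-1) t * truncSbar K N (fun k => c k t) (N-1)
  else
    c (j+1) t * truncS K N (fun k => c k t) (j+1)
      - c j t * truncS K N (fun k => c k t) j
      - c j t * truncSbar K N (fun k => c k t) j
      + c (j-1) t * truncSbar K N (fun k => c k t) (j-1)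

lemma hasDerivAt_Frhs {K : ℕ → ℕ → ℝ} {N : ℕ} {c : ℕ → ℝ → ℝ}
    (hsol : IsTruncEDGSol K N c (Set.Ici 0)) {t : ℝ} (ht : 0 ≤ t) :
    ∀ j ≤ N, HasDerivAt (c j) (Frhs K N c j t) t := by
  intro j hj
  obtain ⟨h0, hmid, hN'⟩ := hsol t ht
  by_cases hj0 : j = 0
  · subst hj0; simpa [Frhs] using h0
  by_cases hjN : j = N
  · subst hjN; simpa [Frhs, hj0] using hN'
  · have h1 : 1 ≤ j := Nat.one_le_iff_ne_zero.2 hj0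
    have h2 : j ≤ N - 1 := by omega
    simpa [Frhs, hj0, hjN] using hmid j h1 h2

lemma weight_identity {K : ℕ → ℕ → ℝ} {N : ℕ} (hN : 1 ≤ N) (c : ℕ → ℝ → ℝ)
    (w : ℕ → ℝ) (t : ℝ) :
    ∑ j ∈ range (N+1), w j * Frhs K N c j t
      = ∑ j ∈ Icc 1 N, (w (j-1) - w j) * (c j t * truncS K N (fun k => c k t) j)
        + ∑ j ∈ range N, (w (j+1) - w j) * (c j t * truncSbar K N (fun k => c k t) j) := by
  set A : ℕ → ℝ := fun i =>
    if 1 ≤ i ∧ i ≤ N then c i t * truncS K N (fun k => c k t) i else 0 with hA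
  set B : ℕ → ℝ := fun i =>
    if i < N then c i t * truncSbar K N (fun k => c k t) i else 0 with hB
  have hF : ∀ j ≤ N, Frhs K N c j t
      = A (j+1) - A j - B j + (if j = 0 then 0 else B (j-1)) := by
    intro j hj
    by_cases hj0 : j = 0
    · subst hj0
      simp only [Frhs, hA, hB, if_pos rfl]
      have h1 : (1 ≤ 1 ∧ 1 ≤ N) := ⟨le_refl 1, hN⟩
      have h2 : ¬ (1 ≤ 0 ∧ 0 ≤ N) := by omega
      have h3 : 0 < N := hN
      simp [h1, h2, h3]
    by_cases hjN : j = N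
    · subst hjN
      have h1 : ¬ (1 ≤ j+1 ∧ j+1 ≤ j) := by omega
      have h2 : (1 ≤ j ∧ j ≤ j) := by omega
      have h3 : ¬ (j < j) := lt_irrefl j
      have h4 : j - 1 < j := by omega
      simp only [Frhs, hA, hB, if_neg hj0, if_pos rfl, if_pos h2, if_neg h1, if_neg h3,
        if_pos h4]
      norm_num
    · have h1 : (1 ≤ j+1 ∧ j+1 ≤ N) := by omega
      have h2 : (1 ≤ j ∧ j ≤ N) := by omega
      have h3 : j < N := by omega
      have h4 : j - 1 < N := by omega
      simp only [Frhs, hA, hB, if_neg hj0, if_neg hjN, if_pos h1, if_pos h2, if_pos h3,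
        if_pos h4]
  have hA0 : A 0 = 0 := by simp [hA]
  have hAN1 : A (N+1) = 0 := by
    have : ¬ (1 ≤ N+1 ∧ N+1 ≤ N) := by omega
    simp [hA, this]
  have hBN : B N = 0 := by simp [hB]
  have step1 : ∑ j ∈ range (N+1), w j * Frhs K N c j t
      = ∑ j ∈ range (N+1), (w j * A (j+1) - w j * A j - w j * B j
          + w j * (if j = 0 then 0 else B (j-1))) := by
    apply Finset.sum_congr rfl
    intro j hj
    rw [hF j (by simpa [Nat.lt_succ_iff] using hj)]
    ring
  rw [step1]
  rw [Finset.sum_add_distrib, Finset.sum_sub_distrib, Finset.sum_sub_distrib]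
  -- shift identities
  have shiftA : ∑ j ∈ range (N+1), w j * A (j+1)
      = ∑ j ∈ range (N+1), w (j-1) * A j := by
    rw [Finset.sum_range_succ, hAN1, Finset.sum_range_succ']
    simp [hA0]
  have shiftB : ∑ j ∈ range (N+1), w j * (if j = 0 then 0 else B (j-1))
      = ∑ j ∈ range (N+1), w (j+1) * B j := by
    rw [Finset.sum_range_succ' (fun j => w j * (if j = 0 then 0 else B (j-1))),
      Finset.sum_range_succ (fun j => w (j+1) * B j), hBN]
    simp
  rw [shiftA, shiftB]
  have convA : ∀ (v : ℕ → ℝ), ∑ j ∈ range (N+1), v j * A j = ∑ j ∈ Icc 1 N,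
      v j * (c j t * truncS K N (fun k => c k t) j) := by
    intro v
    rw [← Finset.sum_subset (s₁ := Icc 1 N) (s₂ := range (N+1))]
    · apply Finset.sum_congr rfl
      intro j hj
      simp only [Finset.mem_Icc] at hj
      simp [hA, hj.1, hj.2]
    · intro j hj
      simp only [Finset.mem_Icc] at hj
      simp only [Finset.mem_range]
      omega
    · intro j hj hj2
      simp only [Finset.mem_range, Nat.lt_succ_iff] at hj
      simp only [Finset.mem_Icc, not_and, not_le] at hj2
      have : ¬ (1 ≤ j ∧ j ≤ N) := by omega
      simp [hA, this]
  have convB : ∀ (v : ℕ → ℝ), ∑ j ∈ range (N+1), v j * B j = ∑ j ∈ range N,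
      v j * (c j t * truncSbar K N (fun k => c k t) j) := by
    intro v
    rw [← Finset.sum_subset (s₁ := range N) (s₂ := range (N+1))]
    · apply Finset.sum_congr rfl
      intro j hj
      simp only [Finset.mem_range] at hj
      simp [hB, hj]
    · intro j hj
      simp only [Finset.mem_range] at *
      omega
    · intro j hj hj2
      simp only [Finset.mem_range] at hj hj2
      simp [hB, hj2]
  rw [convA, convA, convB, convB]
  have eA : ∑ j ∈ Icc 1 N, (w (j-1) - w j) * (c j t * truncS K N (fun k => c k t) j)
      = ∑ j ∈ Icc 1 N, w (j-1) * (c j t * truncS K N (fun k => c k t) j)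
        - ∑ j ∈ Icc 1 N, w j * (c j t * truncS K N (fun k => c k t) j) := by
    rw [← Finset.sum_sub_distrib]
    exact Finset.sum_congr rfl fun j _ => by ring
  have eB : ∑ j ∈ range N, (w (j+1) - w j) * (c j t * truncSbar K N (fun k => c k t) j)
      = ∑ j ∈ range N, w (j+1) * (c j t * truncSbar K N (fun k => c k t) j)
        - ∑ j ∈ range N, w j * (c j t * truncSbar K N (fun k => c k t) j) := by
    rw [← Finset.sum_sub_distrib]
    exact Finset.sum_congr rfl fun j _ => by ring
  rw [eA, eB]
  ring

lemma truncS_bounds {K : ℕ → ℕ → ℝ} {N : ℕ} (hK0 : ∀ j k, 0 ≤ K j k)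
    {d : ℕ → ℝ} {m R Kb : ℝ} (hm : m ≤ 0) (hR : 0 ≤ R)
    (hKb : ∀ a b, a ≤ N → b ≤ N → K a b ≤ Kb)
    (hd : ∀ k ≤ N, m ≤ d k ∧ |d k| ≤ R) {i : ℕ} (hi : i ≤ N) :
    ((N:ℝ)+1) * Kb * m ≤ truncS K N d i ∧ truncS K N d i ≤ ((N:ℝ)+1) * Kb * R := by
  have hKb0 : 0 ≤ Kb := le_trans (hK0 0 0) (hKb 0 0 (Nat.zero_le N) (Nat.zero_le N))
  have hKbm : Kb * m ≤ 0 := mul_nonpos_of_nonneg_of_nonpos hKb0 hm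
  have hKbR : 0 ≤ Kb * R := mul_nonneg hKb0 hR
  simp only [truncS]
  constructor
  · have h1 : ∀ k ∈ range N, Kb * m ≤ K i k * d k := by
      intro k hk
      have hkN : k ≤ N := le_of_lt (Finset.mem_range.1 hk |>.trans_le (le_refl N))
      have h2 : K i k * m ≤ K i k * d k := mul_le_mul_of_nonneg_left (hd k hkN).1 (hK0 i k)
      have h3 : Kb * m ≤ K i k * m := mul_le_mul_of_nonpos_right (hKb i k hi hkN) hm
      linarith
    have h4 := Finset.card_nsmul_le_sum (range N) _ _ h1
    rw [Finset.card_range, nsmul_eq_mul] at h4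
    have h5 : ((N:ℝ)+1) * Kb * m = (N:ℝ) * (Kb * m) + Kb * m := by ring
    linarith
  · have h1 : ∀ k ∈ range N, K i k * d k ≤ Kb * R := by
      intro k hk
      have hkN : k ≤ N := le_of_lt (Finset.mem_range.1 hk)
      have h2 : K i k * d k ≤ K i k * R :=
        mul_le_mul_of_nonneg_left (le_trans (le_abs_self _) (hd k hkN).2) (hK0 i k)
      have h3 : K i k * R ≤ Kb * R := mul_le_mul_of_nonneg_right (hKb i k hi hkN) hR
      linarith
    have h4 := Finset.sum_le_card_nsmul (range N) _ _ h1
    rw [Finset.card_range, nsmul_eq_mul] at h4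
    have h5 : ((N:ℝ)+1) * Kb * R = (N:ℝ) * (Kb * R) + Kb * R := by ring
    linarith

lemma truncSbar_bounds {K : ℕ → ℕ → ℝ} {N : ℕ} (hK0 : ∀ j k, 0 ≤ K j k)
    {d : ℕ → ℝ} {m R Kb : ℝ} (hm : m ≤ 0) (hR : 0 ≤ R)
    (hKb : ∀ a b, a ≤ N → b ≤ N → K a b ≤ Kb)
    (hd : ∀ k ≤ N, m ≤ d k ∧ |d k| ≤ R) {i : ℕ} (hi : i ≤ N) :
    ((N:ℝ)+1) * Kb * m ≤ truncSbar K N d i ∧ truncSbar K N d i ≤ ((N:ℝ)+1) * Kb * R := by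
  have hKb0 : 0 ≤ Kb := le_trans (hK0 0 0) (hKb 0 0 (Nat.zero_le N) (Nat.zero_le N))
  have hKbm : Kb * m ≤ 0 := mul_nonpos_of_nonneg_of_nonpos hKb0 hm
  have hKbR : 0 ≤ Kb * R := mul_nonneg hKb0 hR
  have hcard : (Icc 1 N).card = N := by rw [Nat.card_Icc]; omega
  simp only [truncSbar]
  constructor
  · have h1 : ∀ k ∈ Icc 1 N, Kb * m ≤ K k i * d k := by
      intro k hk
      have hkN : k ≤ N := (Finset.mem_Icc.1 hk).2
      have h2 : K k i * m ≤ K k i * d k := mul_le_mul_of_nonneg_left (hd k hkN).1 (hK0 k i)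
      have h3 : Kb * m ≤ K k i * m := mul_le_mul_of_nonpos_right (hKb k i hkN hi) hm
      linarith
    have h4 := Finset.card_nsmul_le_sum (Icc 1 N) _ _ h1
    rw [hcard, nsmul_eq_mul] at h4
    have h5 : ((N:ℝ)+1) * Kb * m = (N:ℝ) * (Kb * m) + Kb * m := by ring
    linarith
  · have h1 : ∀ k ∈ Icc 1 N, K k i * d k ≤ Kb * R := by
      intro k hk
      have hkN : k ≤ N := (Finset.mem_Icc.1 hk).2
      have h2 : K k i * d k ≤ K k i * R :=
        mul_le_mul_of_nonneg_left (le_trans (le_abs_self _) (hd k hkN).2) (hK0 k i)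
      have h3 : K k i * R ≤ Kb * R := mul_le_mul_of_nonneg_right (hKb k i hkN hi) hR
      linarith
    have h4 := Finset.sum_le_card_nsmul (Icc 1 N) _ _ h1
    rw [hcard, nsmul_eq_mul] at h4
    have h5 : ((N:ℝ)+1) * Kb * R = (N:ℝ) * (Kb * R) + Kb * R := by ring
    linarith

lemma pow_interp {x y μ ν : ℝ} (hx : 1 ≤ x) (hy : 1 ≤ y)
    (hμ : μ ≤ 2) (hν : ν ≤ 2) (hμν : μ + ν ≤ 3) :
    x ^ μ * y ^ ν ≤ x ^ 2 * y + x * y ^ 2 := by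
  have hx0 : (0:ℝ) < x := lt_of_lt_of_le one_pos hx
  have hy0 : (0:ℝ) < y := lt_of_lt_of_le one_pos hy
  rcases le_total x y with hxy | hxy
  · have key : x ^ (μ - 1) * y ^ (ν - 2) ≤ 1 := by
      rcases le_total μ 1 with h1 | h1
      · have h2 : x ^ (μ - 1) ≤ 1 :=
          Real.rpow_le_one_of_one_le_of_nonpos hx (by linarith)
        have h3 : y ^ (ν - 2) ≤ 1 :=
          Real.rpow_le_one_of_one_le_of_nonpos hy (by linarith)
        calc x ^ (μ - 1) * y ^ (ν - 2) ≤ 1 * 1 :=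
              mul_le_mul h2 h3 (Real.rpow_nonneg hy0.le _) zero_le_one
          _ = 1 := by ring
      · have h2 : x ^ (μ - 1) ≤ y ^ (μ - 1) :=
          Real.rpow_le_rpow hx0.le hxy (by linarith)
        have h3 : x ^ (μ-1) * y ^ (ν-2) ≤ y ^ (μ-1) * y ^ (ν-2) :=
          mul_le_mul_of_nonneg_right h2 (Real.rpow_nonneg hy0.le _)
        have h4 : y ^ (μ-1) * y ^ (ν-2) = y ^ (μ + ν - 3) := by
          rw [← Real.rpow_add hy0]; ring_nf
        have h5 : y ^ (μ + ν - 3) ≤ 1 :=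
          Real.rpow_le_one_of_one_le_of_nonpos hy (by linarith)
        linarith
    have e1 : x ^ μ = x * x ^ (μ - 1) := by
      have h := Real.rpow_add hx0 1 (μ - 1)
      rw [Real.rpow_one] at h
      rw [show (1:ℝ) + (μ - 1) = μ by ring] at h
      exact h
    have e2 : y ^ ν = y ^ (2:ℝ) * y ^ (ν - 2) := by
      rw [← Real.rpow_add hy0]; norm_num
    have e3 : y ^ (2:ℝ) = y ^ 2 := by
      rw [Real.rpow_two]
    have expand : x ^ μ * y ^ ν = (x * y ^ 2) * (x ^ (μ-1) * y ^ (ν-2)) := by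
      rw [e1, e2, e3]; ring
    have h7 : (0:ℝ) ≤ x * y ^ 2 := by positivity
    have h8 := mul_le_mul_of_nonneg_left key h7
    have h9 : (0:ℝ) ≤ x ^ 2 * y := by positivity
    rw [expand]
    nlinarith
  · have key : x ^ (μ - 2) * y ^ (ν - 1) ≤ 1 := by
      rcases le_total ν 1 with h1 | h1
      · have h2 : y ^ (ν - 1) ≤ 1 :=
          Real.rpow_le_one_of_one_le_of_nonpos hy (by linarith)
        have h3 : x ^ (μ - 2) ≤ 1 :=
          Real.rpow_le_one_of_one_le_of_nonpos hx (by linarith)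
        calc x ^ (μ - 2) * y ^ (ν - 1) ≤ 1 * 1 :=
              mul_le_mul h3 h2 (Real.rpow_nonneg hy0.le _) zero_le_one
          _ = 1 := by ring
      · have h2 : y ^ (ν - 1) ≤ x ^ (ν - 1) :=
          Real.rpow_le_rpow hy0.le hxy (by linarith)
        have h3 : x ^ (μ-2) * y ^ (ν-1) ≤ x ^ (μ-2) * x ^ (ν-1) :=
          mul_le_mul_of_nonneg_left h2 (Real.rpow_nonneg hx0.le _)
        have h4 : x ^ (μ-2) * x ^ (ν-1) = x ^ (μ + ν - 3) := by
          rw [← Real.rpow_add hx0]; ring_nf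
        have h5 : x ^ (μ + ν - 3) ≤ 1 :=
          Real.rpow_le_one_of_one_le_of_nonpos hx (by linarith)
        linarith
    have e1 : y ^ ν = y * y ^ (ν - 1) := by
      have h := Real.rpow_add hy0 1 (ν - 1)
      rw [Real.rpow_one] at h
      rw [show (1:ℝ) + (ν - 1) = ν by ring] at h
      exact h
    have e2 : x ^ μ = x ^ (2:ℝ) * x ^ (μ - 2) := by
      rw [← Real.rpow_add hx0]; norm_num
    have e3 : x ^ (2:ℝ) = x ^ 2 := by
      rw [Real.rpow_two]
    have expand : x ^ μ * y ^ ν = (x ^ 2 * y) * (x ^ (μ-2) * y ^ (ν-1)) := by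
      rw [e1, e2, e3]; ring
    have h7 : (0:ℝ) ≤ x ^ 2 * y := by positivity
    have h8 := mul_le_mul_of_nonneg_left key h7
    have h9 : (0:ℝ) ≤ x * y ^ 2 := by positivity
    rw [expand]
    nlinarith

lemma prod_lower {m x R Q y : ℝ} (hm : m ≤ 0) (hx : m ≤ x) (hxR : x ≤ R)
    (hy : Q * m ≤ y) (hyR : y ≤ Q * R) (hQ : 0 ≤ Q) (hR : 0 ≤ R) :
    2 * (Q * R * m) ≤ x * y := by
  have h1 : Q * m ≤ 0 := mul_nonpos_of_nonneg_of_nonpos hQ hm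
  have h4 : Q * R * m ≤ 0 :=
    mul_nonpos_of_nonneg_of_nonpos (mul_nonneg hQ hR) hm
  rcases le_total 0 x with h | h
  · have h2 : x * (Q * m) ≤ x * y := mul_le_mul_of_nonneg_left hy h
    have h3 : R * (Q * m) ≤ x * (Q * m) := mul_le_mul_of_nonpos_right hxR h1
    nlinarith
  · have h2 : x * (Q * R) ≤ x * y := mul_le_mul_of_nonpos_left hyR h
    have h3 : m * (Q * R) ≤ x * (Q * R) :=
      mul_le_mul_of_nonneg_right hx (mul_nonneg hQ hR)
    nlinarith

lemma own_lower {m R Q y : ℝ} (hm : m ≤ 0) (hmR : -m ≤ R)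
    (hy : Q * m ≤ y) (hQ : 0 ≤ Q) :
    Q * R * m ≤ (-m) * y := by
  have h1 : (-m) * (Q * m) ≤ (-m) * y :=
    mul_le_mul_of_nonneg_left hy (neg_nonneg.2 hm)
  have h2 : m * (m + R) ≤ 0 :=
    mul_nonpos_of_nonpos_of_nonneg hm (by linarith)
  have h3 : Q * (m * (m + R)) ≤ 0 :=
    mul_nonpos_of_nonneg_of_nonpos hQ h2
  nlinarith
lemma positivity_of_sol {K : ℕ → ℕ → ℝ} {N : ℕ} {c : ℕ → ℝ → ℝ} (hN : 1 ≤ N)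
    (hK0 : ∀ j k, 0 ≤ K j k) (hinit : ∀ j ≤ N, 0 ≤ c j 0)
    (hsol : IsTruncEDGSol K N c (Set.Ici 0)) :
    ∀ T, 0 ≤ T → ∀ j ≤ N, 0 ≤ c j T := by
  intro T hT j hjN
  have hca : ∀ l, l ≤ N → ∀ u : ℝ, 0 ≤ u → ContinuousAt (c l) u := by
    intro l hl u hu
    exact (hasDerivAt_Frhs hsol hu l hl).continuousAt
  obtain ⟨R, hR0, hRb⟩ : ∃ R, 0 ≤ R ∧ ∀ k ≤ N, ∀ u ∈ Set.Icc (0:ℝ) T, |c k u| ≤ R := by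
    have hcont : ContinuousOn (fun u => ∑ k ∈ range (N+1), |c k u|) (Set.Icc 0 T) := by
      apply continuousOn_finset_sum
      intro k hk
      exact fun u hu => ((hca k (by simpa [Nat.lt_succ_iff] using hk) u hu.1).continuousWithinAt).abs
    obtain ⟨R0, hR0b⟩ := isCompact_Icc.exists_bound_of_continuousOn hcont
    refine ⟨max R0 0, le_max_right _ _, ?_⟩
    intro k hk u hu
    have h1 : |c k u| ≤ ∑ l ∈ range (N+1), |c l u| :=
      Finset.single_le_sum (f := fun l => |c l u|) (fun l _ => abs_nonneg _)
        (Finset.mem_range.2 (Nat.lt_succ_of_le hk))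
    have h2 := hR0b u hu
    rw [Real.norm_eq_abs] at h2
    have h3 : ∑ l ∈ range (N+1), |c l u| ≤ R0 := le_trans (le_abs_self _) h2
    exact le_trans h1 (le_trans h3 (le_max_left _ _))
  set Kb := ∑ p ∈ range (N+1) ×ˢ range (N+1), K p.1 p.2 with hKbdef
  have hKb : ∀ a b, a ≤ N → b ≤ N → K a b ≤ Kb := by
    intro p q hp hq
    rw [hKbdef]
    have := Finset.single_le_sum (f := fun r : ℕ × ℕ => K r.1 r.2)
      (fun r _ => hK0 r.1 r.2) (a := (p, q))
      (Finset.mem_product.2 ⟨Finset.mem_range.2 (Nat.lt_succ_of_le hp),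
        Finset.mem_range.2 (Nat.lt_succ_of_le hq)⟩)
    exact this
  have hKb0 : 0 ≤ Kb := Finset.sum_nonneg fun p _ => hK0 p.1 p.2
  set Q : ℝ := ((N:ℝ)+1) * Kb with hQdef
  have hQ0 : 0 ≤ Q := by positivity
  have hQR : Q * R * (1:ℝ) * 0 = 0 := by ring
  set Λ : ℝ := 6 * Q * R + 1 with hΛdef
  suffices H : ∀ ε : ℝ, 0 < ε → 0 < c j T + ε * Real.exp (Λ * T) by
    by_contra hneg
    push_neg at hneg
    have hexp : 0 < Real.exp (Λ * T) := Real.exp_pos _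
    have hε : 0 < (-c j T) / (2 * Real.exp (Λ * T)) := by
      apply div_pos (by linarith) (by linarith)
    have hH := H _ hε
    have heq : (-c j T) / (2 * Real.exp (Λ * T)) * Real.exp (Λ * T) = -c j T / 2 := by
      field_simp
    rw [heq] at hH
    linarith
  intro ε hε
  by_contra hcon
  push_neg at hcon
  set d : ℕ → ℝ → ℝ := fun k u => c k u + ε * Real.exp (Λ * u) with hddef
  set E : Set ℝ := ⋃ k ∈ Finset.range (N+1), {u ∈ Set.Icc (0:ℝ) T | d k u ≤ 0} with hE
  have hEsub : E ⊆ Set.Icc 0 T := by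
    intro u hu
    simp only [hE, Set.mem_iUnion, Set.mem_setOf_eq] at hu
    obtain ⟨k, _, h1, _⟩ := hu
    exact h1
  have hTE : T ∈ E := by
    simp only [hE, Set.mem_iUnion, Set.mem_setOf_eq]
    exact ⟨j, by simp [Finset.mem_range, Nat.lt_succ_iff, hjN], ⟨hT, le_refl T⟩, hcon⟩
  have hbdd : BddBelow E := ⟨0, fun u hu => (hEsub hu).1⟩
  set t0 := sInf E with ht0def
  have ht0cl : t0 ∈ closure E := csInf_mem_closure ⟨T, hTE⟩ hbdd
  have ht0Icc : t0 ∈ Set.Icc 0 T := closure_minimal hEsub isClosed_Icc ht0cl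
  obtain ⟨k, hkmem, ht0k⟩ :
      ∃ k ∈ Finset.range (N+1), t0 ∈ closure {u ∈ Set.Icc (0:ℝ) T | d k u ≤ 0} := by
    rw [hE] at ht0cl
    rw [Finset.closure_biUnion] at ht0cl
    simpa using ht0cl
  have hkN : k ≤ N := by
    have := Finset.mem_range.1 hkmem; omega
  have hdcont : ∀ l, l ≤ N → ContinuousAt (d l) t0 := by
    intro l hl
    have h1 : Continuous fun u : ℝ => ε * Real.exp (Λ * u) :=
      continuous_const.mul (Real.continuous_exp.comp (continuous_const.mul continuous_id))
    exact (hca l hl t0 ht0Icc.1).add h1.continuousAt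
  have hdk0 : d k t0 ≤ 0 := by
    have hne : (𝓝[{u ∈ Set.Icc (0:ℝ) T | d k u ≤ 0}] t0).NeBot :=
      mem_closure_iff_nhdsWithin_neBot.1 ht0k
    have htd : Filter.Tendsto (d k) (𝓝[{u ∈ Set.Icc (0:ℝ) T | d k u ≤ 0}] t0)
        (𝓝 (d k t0)) := (hdcont k hkN).continuousWithinAt.tendsto
    apply le_of_tendsto htd
    filter_upwards [eventually_mem_nhdsWithin] with u hu
    exact hu.2
  have hd0pos : ∀ l, l ≤ N → 0 < d l 0 := by
    intro l hl
    have h1 : d l 0 = c l 0 + ε := by simp [hddef]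
    rw [h1]
    have := hinit l hl
    linarith
  have ht0pos : 0 < t0 := by
    rcases lt_or_eq_of_le ht0Icc.1 with h | h
    · exact h
    · exfalso; rw [← h] at hdk0; exact absurd hdk0 (not_le.2 (hd0pos k hkN))
  have hbefore : ∀ u, u ∈ Set.Ioo (0:ℝ) t0 → ∀ l, l ≤ N → 0 < d l u := by
    intro u hu l hl
    by_contra hc
    push_neg at hc
    have huE : u ∈ E := by
      simp only [hE, Set.mem_iUnion, Set.mem_setOf_eq]
      exact ⟨l, by simp [Finset.mem_range, Nat.lt_succ_iff, hl],
        ⟨hu.1.le, le_trans hu.2.le ht0Icc.2⟩, hc⟩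
    exact absurd (csInf_le hbdd huE) (not_le.2 hu.2)
  have hge : ∀ l, l ≤ N → 0 ≤ d l t0 := by
    intro l hl
    have htd : Filter.Tendsto (d l) (𝓝[<] t0) (𝓝 (d l t0)) :=
      (hdcont l hl).tendsto.mono_left nhdsWithin_le_nhds
    apply ge_of_tendsto htd
    filter_upwards [Ioo_mem_nhdsLT ht0pos] with u hu
    exact (hbefore u hu l hl).le
  have hdk0' : d k t0 = 0 := le_antisymm hdk0 (hge k hkN)
  set m : ℝ := -(ε * Real.exp (Λ * t0)) with hmdef
  have hm0 : m < 0 := by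
    have : 0 < ε * Real.exp (Λ * t0) := mul_pos hε (Real.exp_pos _)
    simp only [hmdef]; linarith
  have hckm : c k t0 = m := by
    have h1 : c k t0 + ε * Real.exp (Λ * t0) = 0 := hdk0'
    simp only [hmdef]; linarith
  have hlower : ∀ l, l ≤ N → m ≤ c l t0 := by
    intro l hl
    have h1 : 0 ≤ c l t0 + ε * Real.exp (Λ * t0) := hge l hl
    simp only [hmdef]; linarith
  have habs : ∀ l, l ≤ N → |c l t0| ≤ R := fun l hl => hRb l hl t0 ht0Icc
  have hmR : -m ≤ R := by
    have h1 := habs k hkN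
    rw [hckm] at h1
    have h2 : -m ≤ |m| := neg_le_abs m
    linarith
  have hDer : HasDerivAt (d k) (Frhs K N c k t0 + ε * (Real.exp (Λ * t0) * (Λ * 1))) t0 := by
    have h1 := hasDerivAt_Frhs hsol ht0Icc.1 k hkN
    have h2 : HasDerivAt (fun u : ℝ => Λ * u) (Λ * 1) t0 := (hasDerivAt_id t0).const_mul Λ
    have h3 := (h2.exp).const_mul ε
    exact h1.add h3
  have hslope : Frhs K N c k t0 + ε * (Real.exp (Λ * t0) * (Λ * 1)) ≤ 0 := by
    have htendsto := hasDerivAt_iff_tendsto_slope.1 hDer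
    have hmono : 𝓝[<] t0 ≤ 𝓝[≠] t0 :=
      nhdsWithin_mono t0 (fun u hu => ne_of_lt hu)
    apply le_of_tendsto (htendsto.mono_left hmono)
    filter_upwards [Ioo_mem_nhdsLT ht0pos] with u hu
    rw [slope_def_field]
    apply div_nonpos_of_nonneg_of_nonpos
    · rw [hdk0', sub_zero]
      exact (hbefore u hu k hkN).le
    · linarith [hu.2]
  have hup : Frhs K N c k t0 ≤ Λ * m := by
    have h1 : Λ * m = -(ε * (Real.exp (Λ * t0) * (Λ * 1))) := by
      simp only [hmdef]; ring
    linarith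
  have hdpair : ∀ l, l ≤ N → m ≤ c l t0 ∧ |c l t0| ≤ R :=
    fun l hl => ⟨hlower l hl, habs l hl⟩
  have hS : ∀ i, i ≤ N → Q * m ≤ truncS K N (fun l => c l t0) i
      ∧ truncS K N (fun l => c l t0) i ≤ Q * R := by
    intro i hi
    have := truncS_bounds hK0 hm0.le hR0 hKb hdpair hi
    rwa [hQdef]
  have hSb : ∀ i, i ≤ N → Q * m ≤ truncSbar K N (fun l => c l t0) i
      ∧ truncSbar K N (fun l => c l t0) i ≤ Q * R := by
    intro i hi
    have := truncSbar_bounds hK0 hm0.le hR0 hKb hdpair hi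
    rwa [hQdef]
  have hQRm : Q * R * m ≤ 0 := mul_nonpos_of_nonneg_of_nonpos (mul_nonneg hQ0 hR0) hm0.le
  have hxR : ∀ l, l ≤ N → c l t0 ≤ R := fun l hl => le_trans (le_abs_self _) (habs l hl)
  have hlow : 6 * (Q * R * m) ≤ Frhs K N c k t0 := by
    by_cases hk0 : k = 0
    · have heq : Frhs K N c k t0
          = c 1 t0 * truncS K N (fun l => c l t0) 1
            - c 0 t0 * truncSbar K N (fun l => c l t0) 0 := by
        rw [hk0]; simp [Frhs]
      have hck : c 0 t0 = m := hk0 ▸ hckm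
      have t1 := prod_lower hm0.le (hlower 1 hN) (hxR 1 hN) (hS 1 hN).1 (hS 1 hN).2 hQ0 hR0
      have t2 := own_lower hm0.le hmR (hSb 0 (Nat.zero_le N)).1 hQ0
      rw [heq, hck]
      have hrw : m * truncSbar K N (fun l => c l t0) 0
          = -((-m) * truncSbar K N (fun l => c l t0) 0) := by ring
      linarith [hrw.ge, hrw.le]
    · by_cases hkNe : k = N
      · have heq : Frhs K N c k t0
            = - c N t0 * truncS K N (fun l => c l t0) N
              + c (N-1) t0 * truncSbar K N (fun l => c l t0) (N-1) := by
          simp only [Frhs, if_neg hk0, if_pos hkNe]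
        have hck : c N t0 = m := hkNe ▸ hckm
        have hN1 : N - 1 ≤ N := Nat.sub_le N 1
        have t1 := own_lower hm0.le hmR (hS N (le_refl N)).1 hQ0
        have t2 := prod_lower hm0.le (hlower (N-1) hN1) (hxR (N-1) hN1)
          (hSb (N-1) hN1).1 (hSb (N-1) hN1).2 hQ0 hR0
        rw [heq, hck]
        have hrw : -m * truncS K N (fun l => c l t0) N
            = (-m) * truncS K N (fun l => c l t0) N := by ring
        linarith [hrw.ge, hrw.le]
      · have heq : Frhs K N c k t0
            = c (k+1) t0 * truncS K N (fun l => c l t0) (k+1)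
              - c k t0 * truncS K N (fun l => c l t0) k
              - c k t0 * truncSbar K N (fun l => c l t0) k
              + c (k-1) t0 * truncSbar K N (fun l => c l t0) (k-1) := by
          simp only [Frhs, if_neg hk0, if_neg hkNe]
        have hk1 : k + 1 ≤ N := by omega
        have hkm1 : k - 1 ≤ N := by omega
        have t1 := prod_lower hm0.le (hlower (k+1) hk1) (hxR (k+1) hk1)
          (hS (k+1) hk1).1 (hS (k+1) hk1).2 hQ0 hR0
        have t2 := own_lower hm0.le hmR (hS k hkN).1 hQ0
        have t3 := own_lower hm0.le hmR (hSb k hkN).1 hQ0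
        have t4 := prod_lower hm0.le (hlower (k-1) hkm1) (hxR (k-1) hkm1)
          (hSb (k-1) hkm1).1 (hSb (k-1) hkm1).2 hQ0 hR0
        rw [heq, hckm]
        have hrw1 : m * truncS K N (fun l => c l t0) k
            = -((-m) * truncS K N (fun l => c l t0) k) := by ring
        have hrw2 : m * truncSbar K N (fun l => c l t0) k
            = -((-m) * truncSbar K N (fun l => c l t0) k) := by ring
        linarith [hrw1.ge, hrw1.le, hrw2.ge, hrw2.le]
  have hfinal : Λ * m = 6 * (Q * R * m) + m := by
    rw [hΛdef]; ring
  linarith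
lemma exchange_sum (K : ℕ → ℕ → ℝ) (N : ℕ) (v : ℕ → ℝ) :
    ∑ j ∈ Icc 1 N, v j * truncS K N v j = ∑ j ∈ range N, v j * truncSbar K N v j := by
  simp only [truncS, truncSbar, Finset.mul_sum]
  rw [Finset.sum_comm]
  apply Finset.sum_congr rfl
  intro j _
  apply Finset.sum_congr rfl
  intro k _
  ring

theorem truncated_second_moment_apriori_bound (C : ℝ) (hC : 0 < C) :
    ∃ C' > (0 : ℝ), ∀ (K : ℕ → ℕ → ℝ) (N : ℕ) (μ ν : ℝ) (c : ℕ → ℝ → ℝ),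
      1 ≤ N →
      (∀ j k, 0 ≤ K j k) → (∀ j, K 0 j = 0) →
      (∀ j k, 1 ≤ j → 1 ≤ k → K j k = K k j) →
      μ ≤ 2 → ν ≤ 2 → μ + ν ≤ 3 →
      (∀ j k : ℕ, 1 ≤ j → 1 ≤ k →
        K j k ≤ C * ((j : ℝ) ^ μ * (k : ℝ) ^ ν + (j : ℝ) ^ ν * (k : ℝ) ^ μ)) →
      (∀ j ≤ N, 0 ≤ c j 0) →
      IsTruncEDGSol K N c (Set.Ici 0) →
      ∀ t ≥ (0 : ℝ),
        ∑ j ∈ Finset.range (N + 1), (j : ℝ) ^ 2 * c j t ≤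
          (∑ j ∈ Finset.range (N + 1), (j : ℝ) ^ 2 * c j 0) *
            Real.exp (C' * (∑ j ∈ Finset.range (N + 1), (j : ℝ) * c j 0) * t) := by
  refine ⟨8 * C, by linarith, ?_⟩
  intro K N μ ν c hN hK0 hK00 hsym hμ hν hμν hKle hinit hsol t ht
  have hpos : ∀ u, 0 ≤ u → ∀ l ≤ N, 0 ≤ c l u :=
    fun u hu => positivity_of_sol hN hK0 hinit hsol u hu
  set M1 : ℝ → ℝ := fun u => ∑ l ∈ range (N+1), (l:ℝ) * c l u with hM1def
  set M2 : ℝ → ℝ := fun u => ∑ l ∈ range (N+1), (l:ℝ)^2 * c l u with hM2def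
  have hM1deriv : ∀ u, 0 ≤ u →
      HasDerivAt M1 (∑ l ∈ range (N+1), (l:ℝ) * Frhs K N c l u) u := by
    intro u hu
    apply HasDerivAt.fun_sum
    intro l hl
    exact (hasDerivAt_Frhs hsol hu l (Nat.lt_succ_iff.1 (Finset.mem_range.1 hl))).const_mul _
  have hM2deriv : ∀ u, 0 ≤ u →
      HasDerivAt M2 (∑ l ∈ range (N+1), (l:ℝ)^2 * Frhs K N c l u) u := by
    intro u hu
    apply HasDerivAt.fun_sum
    intro l hl
    exact (hasDerivAt_Frhs hsol hu l (Nat.lt_succ_iff.1 (Finset.mem_range.1 hl))).const_mul _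
  have hM1sum : ∀ u : ℝ, ∑ l ∈ range (N+1), (l:ℝ) * Frhs K N c l u = 0 := by
    intro u
    rw [weight_identity hN c (fun l => (l:ℝ)) u]
    have h1 : ∑ j ∈ Icc 1 N, (((j-1 : ℕ):ℝ) - (j:ℝ)) * (c j u * truncS K N (fun k => c k u) j)
        = - ∑ j ∈ Icc 1 N, ((fun k => c k u) j * truncS K N (fun k => c k u) j) := by
      rw [← Finset.sum_neg_distrib]
      apply Finset.sum_congr rfl
      intro j hj
      have h2 : 1 ≤ j := (Finset.mem_Icc.1 hj).1
      rw [Nat.cast_sub h2]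
      push_cast
      ring
    have h3 : ∑ j ∈ range N, (((j+1 : ℕ):ℝ) - (j:ℝ)) * (c j u * truncSbar K N (fun k => c k u) j)
        = ∑ j ∈ range N, ((fun k => c k u) j * truncSbar K N (fun k => c k u) j) := by
      apply Finset.sum_congr rfl
      intro j _
      push_cast
      ring
    rw [h1, h3, exchange_sum K N (fun k => c k u)]
    ring
  have hMcont : ∀ (w : ℕ → ℝ) (b : ℝ),
      ContinuousOn (fun u => ∑ l ∈ range (N+1), w l * c l u) (Set.Icc 0 b) := by
    intro w b
    apply continuousOn_finset_sum
    intro l hl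
    intro u hu
    exact (continuousAt_const.mul
      ((hasDerivAt_Frhs hsol hu.1 l
        (Nat.lt_succ_iff.1 (Finset.mem_range.1 hl))).continuousAt)).continuousWithinAt
  have hM1const : ∀ u, 0 ≤ u → M1 u = M1 0 := by
    intro u hu
    have hk := constant_of_has_deriv_right_zero (f := M1) (a := 0) (b := u)
      (by rw [hM1def]; exact hMcont _ u)
      (fun x hx => by
        have h := hM1deriv x hx.1
        rw [hM1sum x] at h
        exact h.hasDerivWithinAt)
    exact hk u (Set.mem_Icc.2 ⟨hu, le_refl u⟩)
  have hM10 : 0 ≤ M1 0 := by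
    rw [hM1def]
    exact Finset.sum_nonneg fun l hl =>
      mul_nonneg (Nat.cast_nonneg l) (hinit l (Nat.lt_succ_iff.1 (Finset.mem_range.1 hl)))
  -- the key differential inequality
  have hM2bound : ∀ u, 0 ≤ u →
      (∑ l ∈ range (N+1), (l:ℝ)^2 * Frhs K N c l u) ≤ 8 * C * (M1 u * M2 u) := by
    intro u hu
    have hposu : ∀ l, l ≤ N → 0 ≤ c l u := hpos u hu
    rw [weight_identity hN c (fun l => (l:ℝ)^2) u]
    have e1 : ∑ j ∈ Icc 1 N, ((((j-1:ℕ)):ℝ)^2 - ((j:ℝ))^2) * (c j u * truncS K N (fun k => c k u) j)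
        = ∑ j ∈ Icc 1 N, ∑ k ∈ range N, (1 - 2*(j:ℝ)) * (K j k * (c j u * c k u)) := by
      apply Finset.sum_congr rfl
      intro j hj
      have h2 : 1 ≤ j := (Finset.mem_Icc.1 hj).1
      rw [Nat.cast_sub h2]
      simp only [truncS, Finset.mul_sum]
      apply Finset.sum_congr rfl
      intro k _
      push_cast
      ring
    have e2 : ∑ j ∈ range N, ((((j+1:ℕ)):ℝ)^2 - ((j:ℝ))^2) * (c j u * truncSbar K N (fun k => c k u) j)
        = ∑ j ∈ Icc 1 N, ∑ k ∈ range N, (2*(k:ℝ) + 1) * (K j k * (c j u * c k u)) := by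
      have hrow : ∀ j, ((((j+1:ℕ)):ℝ)^2 - ((j:ℝ))^2) * (c j u * truncSbar K N (fun k => c k u) j)
          = ∑ k ∈ Icc 1 N, (2*(j:ℝ)+1) * (K k j * (c k u * c j u)) := by
        intro j
        simp only [truncSbar, Finset.mul_sum]
        apply Finset.sum_congr rfl
        intro k _
        push_cast
        ring
      rw [Finset.sum_congr rfl (fun j _ => hrow j), Finset.sum_comm]
    rw [e1, e2, ← Finset.sum_add_distrib]
    have e3 : ∑ j ∈ Icc 1 N, (∑ k ∈ range N, (1 - 2*(j:ℝ)) * (K j k * (c j u * c k u))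
          + ∑ k ∈ range N, (2*(k:ℝ) + 1) * (K j k * (c j u * c k u)))
        = ∑ j ∈ Icc 1 N, ∑ k ∈ range N, (2*(k:ℝ) - 2*(j:ℝ) + 2) * (K j k * (c j u * c k u)) := by
      apply Finset.sum_congr rfl
      intro j _
      rw [← Finset.sum_add_distrib]
      apply Finset.sum_congr rfl
      intro k _
      ring
    rw [e3]
    have hG : ∀ j k : ℕ, j ≤ N → k ≤ N → 0 ≤ K j k * (c j u * c k u) := by
      intro j k hj hk
      exact mul_nonneg (hK0 j k) (mul_nonneg (hposu j hj) (hposu k hk))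
    have hrange : range N = insert 0 (Icc 1 (N-1)) := by
      ext x
      simp only [Finset.mem_range, Finset.mem_insert, Finset.mem_Icc]
      omega
    have hIcc : Icc 1 N = insert N (Icc 1 (N-1)) := by
      ext x
      simp only [Finset.mem_insert, Finset.mem_Icc]
      omega
    have stepA : ∑ j ∈ Icc 1 N, ∑ k ∈ range N, (2*(k:ℝ) - 2*(j:ℝ) + 2) * (K j k * (c j u * c k u))
        ≤ ∑ j ∈ Icc 1 N, ∑ k ∈ Icc 1 (N-1), (2*(k:ℝ) - 2*(j:ℝ) + 2) * (K j k * (c j u * c k u)) := by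
      apply Finset.sum_le_sum
      intro j hj
      obtain ⟨hj1, hjN⟩ := Finset.mem_Icc.1 hj
      rw [hrange, Finset.sum_insert (by simp [Finset.mem_Icc])]
      have hz : (2*((0:ℕ):ℝ) - 2*(j:ℝ) + 2) * (K j 0 * (c j u * c 0 u)) ≤ 0 := by
        apply mul_nonpos_of_nonpos_of_nonneg
        · have : (1:ℝ) ≤ (j:ℝ) := by exact_mod_cast hj1
          push_cast
          linarith
        · exact hG j 0 hjN (Nat.zero_le N)
      linarith
    have stepB : ∑ j ∈ Icc 1 N, ∑ k ∈ Icc 1 (N-1), (2*(k:ℝ) - 2*(j:ℝ) + 2) * (K j k * (c j u * c k u))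
        ≤ ∑ j ∈ Icc 1 (N-1), ∑ k ∈ Icc 1 (N-1), (2*(k:ℝ) - 2*(j:ℝ) + 2) * (K j k * (c j u * c k u)) := by
      rw [hIcc, Finset.sum_insert (by simp only [Finset.mem_Icc]; omega)]
      have hz : ∑ k ∈ Icc 1 (N-1), (2*(k:ℝ) - 2*(N:ℝ) + 2) * (K N k * (c N u * c k u)) ≤ 0 := by
        apply Finset.sum_nonpos
        intro k hk
        obtain ⟨hk1, hkN⟩ := Finset.mem_Icc.1 hk
        apply mul_nonpos_of_nonpos_of_nonneg
        · have h1 : (k:ℝ) + 1 ≤ (N:ℝ) := by exact_mod_cast (by omega : k + 1 ≤ N)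
          linarith
        · exact hG N k (le_refl N) (by omega)
      linarith
    have hmem : ∀ l ∈ Icc 1 (N-1), 1 ≤ l ∧ l ≤ N := by
      intro l hl
      have := Finset.mem_Icc.1 hl
      omega
    have hsymW : ∑ j ∈ Icc 1 (N-1), ∑ k ∈ Icc 1 (N-1), (2*(k:ℝ) - 2*(j:ℝ) + 2) * (K j k * (c j u * c k u))
        = ∑ j ∈ Icc 1 (N-1), ∑ k ∈ Icc 1 (N-1), (2*(j:ℝ) - 2*(k:ℝ) + 2) * (K j k * (c j u * c k u)) := by
      rw [Finset.sum_comm]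
      apply Finset.sum_congr rfl
      intro j hj
      apply Finset.sum_congr rfl
      intro k hk
      rw [hsym k j (hmem k hk).1 (hmem j hj).1]
      ring
    have hdouble : (∑ j ∈ Icc 1 (N-1), ∑ k ∈ Icc 1 (N-1), (2*(k:ℝ) - 2*(j:ℝ) + 2) * (K j k * (c j u * c k u)))
          + (∑ j ∈ Icc 1 (N-1), ∑ k ∈ Icc 1 (N-1), (2*(k:ℝ) - 2*(j:ℝ) + 2) * (K j k * (c j u * c k u)))
        = ∑ j ∈ Icc 1 (N-1), ∑ k ∈ Icc 1 (N-1), 4 * (K j k * (c j u * c k u)) := by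
      nth_rewrite 2 [hsymW]
      rw [← Finset.sum_add_distrib]
      apply Finset.sum_congr rfl
      intro j _
      rw [← Finset.sum_add_distrib]
      apply Finset.sum_congr rfl
      intro k _
      ring
    have hterm : ∀ j ∈ Icc 1 (N-1), ∀ k ∈ Icc 1 (N-1),
        4 * (K j k * (c j u * c k u))
          ≤ 8*C*(((j:ℝ)^2*(k:ℝ) + (j:ℝ)*(k:ℝ)^2) * (c j u * c k u)) := by
      intro j hj k hk
      have hj' := hmem j hj
      have hk' := hmem k hk
      have h1j : (1:ℝ) ≤ (j:ℝ) := by exact_mod_cast hj'.1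
      have h1k : (1:ℝ) ≤ (k:ℝ) := by exact_mod_cast hk'.1
      have hp1 := pow_interp h1j h1k hμ hν hμν
      have hp2 := pow_interp h1j h1k hν hμ (by linarith)
      have hcc : 0 ≤ c j u * c k u := mul_nonneg (hposu j hj'.2) (hposu k hk'.2)
      have hK := hKle j k hj'.1 hk'.1
      have h5 : K j k * (c j u * c k u)
          ≤ C * ((j:ℝ)^μ*(k:ℝ)^ν + (j:ℝ)^ν*(k:ℝ)^μ) * (c j u * c k u) :=
        mul_le_mul_of_nonneg_right hK hcc
      have h6 : C * ((j:ℝ)^μ*(k:ℝ)^ν + (j:ℝ)^ν*(k:ℝ)^μ)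
          ≤ C * (2*((j:ℝ)^2*(k:ℝ) + (j:ℝ)*(k:ℝ)^2)) :=
        mul_le_mul_of_nonneg_left (by linarith) hC.le
      have h7 : C * ((j:ℝ)^μ*(k:ℝ)^ν + (j:ℝ)^ν*(k:ℝ)^μ) * (c j u * c k u)
          ≤ C * (2*((j:ℝ)^2*(k:ℝ) + (j:ℝ)*(k:ℝ)^2)) * (c j u * c k u) :=
        mul_le_mul_of_nonneg_right h6 hcc
      nlinarith [h5, h7]
    have hsum4 : ∑ j ∈ Icc 1 (N-1), ∑ k ∈ Icc 1 (N-1), 4 * (K j k * (c j u * c k u))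
        ≤ ∑ j ∈ Icc 1 (N-1), ∑ k ∈ Icc 1 (N-1),
            8*C*(((j:ℝ)^2*(k:ℝ) + (j:ℝ)*(k:ℝ)^2) * (c j u * c k u)) := by
      apply Finset.sum_le_sum
      intro j hj
      apply Finset.sum_le_sum
      intro k hk
      exact hterm j hj k hk
    have hprod : ∑ j ∈ Icc 1 (N-1), ∑ k ∈ Icc 1 (N-1),
          8*C*(((j:ℝ)^2*(k:ℝ) + (j:ℝ)*(k:ℝ)^2) * (c j u * c k u))
        = 8*C*((∑ j ∈ Icc 1 (N-1), (j:ℝ)^2 * c j u) * (∑ k ∈ Icc 1 (N-1), (k:ℝ) * c k u)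
            + (∑ j ∈ Icc 1 (N-1), (j:ℝ) * c j u) * (∑ k ∈ Icc 1 (N-1), (k:ℝ)^2 * c k u)) := by
      rw [Finset.sum_mul_sum, Finset.sum_mul_sum, ← Finset.sum_add_distrib, Finset.mul_sum]
      apply Finset.sum_congr rfl
      intro j _
      rw [← Finset.sum_add_distrib, Finset.mul_sum]
      apply Finset.sum_congr rfl
      intro k _
      ring
    have hsubset : Icc 1 (N-1) ⊆ range (N+1) := by
      intro l hl
      simp only [Finset.mem_range]
      have := Finset.mem_Icc.1 hl
      omega
    have hS1le : ∑ l ∈ Icc 1 (N-1), (l:ℝ) * c l u ≤ M1 u := by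
      rw [hM1def]
      apply Finset.sum_le_sum_of_subset_of_nonneg hsubset
      intro l hl _
      exact mul_nonneg (Nat.cast_nonneg l) (hposu l (Nat.lt_succ_iff.1 (Finset.mem_range.1 hl)))
    have hS2le : ∑ l ∈ Icc 1 (N-1), (l:ℝ)^2 * c l u ≤ M2 u := by
      rw [hM2def]
      apply Finset.sum_le_sum_of_subset_of_nonneg hsubset
      intro l hl _
      exact mul_nonneg (sq_nonneg _) (hposu l (Nat.lt_succ_iff.1 (Finset.mem_range.1 hl)))
    have hS1nn : 0 ≤ ∑ l ∈ Icc 1 (N-1), (l:ℝ) * c l u :=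
      Finset.sum_nonneg fun l hl =>
        mul_nonneg (Nat.cast_nonneg l) (hposu l (hmem l hl).2)
    have hS2nn : 0 ≤ ∑ l ∈ Icc 1 (N-1), (l:ℝ)^2 * c l u :=
      Finset.sum_nonneg fun l hl =>
        mul_nonneg (sq_nonneg _) (hposu l (hmem l hl).2)
    have hM1nn : 0 ≤ M1 u := by
      rw [hM1def]
      exact Finset.sum_nonneg fun l hl =>
        mul_nonneg (Nat.cast_nonneg l) (hposu l (Nat.lt_succ_iff.1 (Finset.mem_range.1 hl)))
    have hM2nn : 0 ≤ M2 u := by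
      rw [hM2def]
      exact Finset.sum_nonneg fun l hl =>
        mul_nonneg (sq_nonneg _) (hposu l (Nat.lt_succ_iff.1 (Finset.mem_range.1 hl)))
    have hP1 : (∑ l ∈ Icc 1 (N-1), (l:ℝ)^2 * c l u) * (∑ l ∈ Icc 1 (N-1), (l:ℝ) * c l u)
        ≤ M2 u * M1 u := mul_le_mul hS2le hS1le hS1nn hM2nn
    have hP2 : (∑ l ∈ Icc 1 (N-1), (l:ℝ) * c l u) * (∑ l ∈ Icc 1 (N-1), (l:ℝ)^2 * c l u)
        ≤ M1 u * M2 u := mul_le_mul hS1le hS2le hS2nn hM1nn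
    have hfin : 8*C*((∑ j ∈ Icc 1 (N-1), (j:ℝ)^2 * c j u) * (∑ k ∈ Icc 1 (N-1), (k:ℝ) * c k u)
            + (∑ j ∈ Icc 1 (N-1), (j:ℝ) * c j u) * (∑ k ∈ Icc 1 (N-1), (k:ℝ)^2 * c k u))
        ≤ 16 * C * (M1 u * M2 u) := by
      nlinarith [hP1, hP2]
    calc ∑ j ∈ Icc 1 N, ∑ k ∈ range N, (2*(k:ℝ) - 2*(j:ℝ) + 2) * (K j k * (c j u * c k u))
        ≤ ∑ j ∈ Icc 1 (N-1), ∑ k ∈ Icc 1 (N-1),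
            (2*(k:ℝ) - 2*(j:ℝ) + 2) * (K j k * (c j u * c k u)) := le_trans stepA stepB
      _ ≤ 8 * C * (M1 u * M2 u) := by
          have h8 := le_trans hsum4 (le_of_eq hprod)
          linarith [le_trans h8 hfin]
  -- Gronwall
  set L : ℝ := 8 * C * M1 0 with hLdef
  have hM2cont : ContinuousOn M2 (Set.Icc 0 t) := by
    rw [hM2def]; exact hMcont _ t
  have hslopecond : ∀ x ∈ Set.Ico (0:ℝ) t, ∀ r,
      (∑ l ∈ range (N+1), (l:ℝ)^2 * Frhs K N c l x) < r →
      ∃ᶠ z in 𝓝[>] x, (z - x)⁻¹ * (M2 z - M2 x) < r := by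
    intro x hx r hr
    have hd := hM2deriv x hx.1
    have h2 : Filter.Tendsto (slope M2 x) (𝓝[>] x)
        (𝓝 (∑ l ∈ range (N+1), (l:ℝ)^2 * Frhs K N c l x)) :=
      (hasDerivAt_iff_tendsto_slope.1 hd).mono_left
        (nhdsWithin_mono x fun z hz => ne_of_gt hz)
    apply (h2.eventually_lt_const hr).frequently.mono
    intro z hz
    rwa [slope_def_field, div_eq_inv_mul] at hz
  have hboundL : ∀ x ∈ Set.Ico (0:ℝ) t,
      (∑ l ∈ range (N+1), (l:ℝ)^2 * Frhs K N c l x) ≤ L * M2 x + 0 := by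
    intro x hx
    have h1 := hM2bound x hx.1
    rw [hM1const x hx.1] at h1
    have h2 : L * M2 x = 8*C*(M1 0 * M2 x) := by rw [hLdef]; ring
    linarith
  have key := le_gronwallBound_of_liminf_deriv_right_le (a := 0) (b := t)
    hM2cont hslopecond (le_refl (M2 0)) hboundL t (Set.mem_Icc.2 ⟨ht, le_refl t⟩)
  rw [gronwallBound_ε0] at key
  have harg : L * (t - 0) = 8 * C * M1 0 * t := by rw [hLdef]; ring
  rw [harg] at key
  exact key
end

section
/- Suppose K is symmetric on positive arguments, nonnegative, and satisfies K(j,k) <= C j^2 k^2 for all j,k >= 1. Then any nonnegative solution of the truncated EDG system of size N satisfies M_2^N(t) <= 1 / (1/M_2^N(0) - 2C''t) for all t < 1/(2 C'' M_2^N(0)), where M_2^N(t) = sum_{j=0}^N j^2 c_j^N(t) and C'' is a constant depending only on C. -/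
open Finset

lemma helperU (u : ℕ → ℝ) (n : ℕ) :
    ∑ j ∈ Icc 1 n, (j:ℝ)^2 * u (j+1) - ∑ j ∈ Icc 1 n, (j:ℝ)^2 * u j
      - ((n:ℝ)+1)^2 * u (n+1)
    = ∑ i ∈ Icc 1 (n+1), (((i:ℝ)-1)^2 - (i:ℝ)^2) * u i := by
  induction n with
  | zero => simp
  | succ m ih =>
      rw [Finset.sum_Icc_succ_top (by omega : 1 ≤ m+1),
        Finset.sum_Icc_succ_top (by omega : 1 ≤ m+1),
        Finset.sum_Icc_succ_top (by omega : 1 ≤ m+1+1), ← ih]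
      push_cast
      ring

lemma helperV (v : ℕ → ℝ) (n : ℕ) :
    ∑ j ∈ Icc 1 n, (j:ℝ)^2 * (- v j + v (j-1)) + ((n:ℝ)+1)^2 * v n
    = ∑ i ∈ Icc 0 n, (((i:ℝ)+1)^2 - (i:ℝ)^2) * v i := by
  induction n with
  | zero => simp
  | succ m ih =>
      rw [Finset.sum_Icc_succ_top (by omega : 1 ≤ m+1),
        Finset.sum_Icc_succ_top (by omega : (0:ℕ) ≤ m+1), ← ih]
      simp only [Nat.add_sub_cancel]
      push_cast
      ring

lemma moment_identity (K : ℕ → ℕ → ℝ) (n : ℕ) (a : ℕ → ℝ) :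
    (∑ j ∈ Icc 1 n, (j:ℝ)^2 *
        (a (j+1) * truncS K (n+1) a (j+1) - a j * truncS K (n+1) a j
          - a j * truncSbar K (n+1) a j + a (j-1) * truncSbar K (n+1) a (j-1)))
      + ((n:ℝ)+1)^2 * (-(a (n+1) * truncS K (n+1) a (n+1))
          + a n * truncSbar K (n+1) a n) =
    ∑ i ∈ Icc 1 (n+1), ∑ k ∈ Finset.range (n+1),
      K i k * a i * a k * (2*(k:ℝ) - 2*(i:ℝ) + 2) := by
  set u : ℕ → ℝ := fun i => a i * truncS K (n+1) a i with hu
  set v : ℕ → ℝ := fun i => a i * truncSbar K (n+1) a i with hv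
  have lhs_eq : (∑ j ∈ Icc 1 n, (j:ℝ)^2 *
        (u (j+1) - u j - v j + v (j-1)))
      + ((n:ℝ)+1)^2 * (-(u (n+1)) + v n)
    = ∑ i ∈ Icc 1 (n+1), (((i:ℝ)-1)^2 - (i:ℝ)^2) * u i
      + ∑ i ∈ Icc 0 n, (((i:ℝ)+1)^2 - (i:ℝ)^2) * v i := by
    rw [← helperU u n, ← helperV v n]
    have e : ∀ j : ℕ, (j:ℝ)^2 * (u (j+1) - u j - v j + v (j-1))
        = ((j:ℝ)^2 * u (j+1) - (j:ℝ)^2 * u j) + (j:ℝ)^2 * (-v j + v (j-1)) :=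
      fun j => by ring
    rw [Finset.sum_congr rfl (fun j _ => e j), Finset.sum_add_distrib,
      Finset.sum_sub_distrib]
    ring
  rw [lhs_eq]
  -- expand u and v
  have hU : ∑ i ∈ Icc 1 (n+1), (((i:ℝ)-1)^2 - (i:ℝ)^2) * u i
      = ∑ i ∈ Icc 1 (n+1), ∑ k ∈ Finset.range (n+1),
          (((i:ℝ)-1)^2 - (i:ℝ)^2) * (K i k * a i * a k) := by
    refine Finset.sum_congr rfl fun i _ => ?_
    rw [hu]; simp only [truncS, Finset.mul_sum]
    refine Finset.sum_congr rfl fun k _ => by ring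
  have hV : ∑ i ∈ Icc 0 n, (((i:ℝ)+1)^2 - (i:ℝ)^2) * v i
      = ∑ i ∈ Icc 1 (n+1), ∑ k ∈ Finset.range (n+1),
          (((k:ℝ)+1)^2 - (k:ℝ)^2) * (K i k * a i * a k) := by
    rw [show Icc 0 n = Finset.range (n+1) by
      rw [Finset.range_eq_Ico, Finset.Ico_add_one_right_eq_Icc]]
    have e : ∀ i : ℕ, (((i:ℝ)+1)^2 - (i:ℝ)^2) * v i
        = ∑ k ∈ Icc 1 (n+1), (((i:ℝ)+1)^2 - (i:ℝ)^2) * (K k i * a k * a i) := by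
      intro i
      simp only [hv, truncSbar, Finset.mul_sum]
      exact Finset.sum_congr rfl fun k _ => by ring
    rw [Finset.sum_congr rfl (fun i _ => e i), Finset.sum_comm]
  rw [hU, hV, ← Finset.sum_add_distrib]
  refine Finset.sum_congr rfl fun i _ => ?_
  rw [← Finset.sum_add_distrib]
  exact Finset.sum_congr rfl fun k _ => by ring

lemma moment_bound (C : ℝ) (hC : 0 < C) (K : ℕ → ℕ → ℝ) (n : ℕ)
    (hKnn : ∀ j k, 0 ≤ K j k)
    (hKsym : ∀ j k, 1 ≤ j → 1 ≤ k → K j k = K k j)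
    (hKb : ∀ j k : ℕ, 1 ≤ j → 1 ≤ k → K j k ≤ C * (j:ℝ)^2 * (k:ℝ)^2)
    (a : ℕ → ℝ) (ha : ∀ j ≤ n+1, 0 ≤ a j) :
    ∑ i ∈ Icc 1 (n+1), ∑ k ∈ Finset.range (n+1),
        K i k * a i * a k * (2*(k:ℝ) - 2*(i:ℝ) + 2)
      ≤ 2 * C * (∑ j ∈ Finset.range (n+2), (j:ℝ)^2 * a j)^2 := by
  set M : ℝ := ∑ j ∈ Finset.range (n+2), (j:ℝ)^2 * a j with hM
  have hMnn : 0 ≤ M := Finset.sum_nonneg fun j hj => by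
    have := ha j (by simpa using Nat.lt_succ_iff.mp (Finset.mem_range.mp hj))
    positivity
  -- split off k = 0
  have hsplit : ∀ i ∈ Icc 1 (n+1),
      ∑ k ∈ Finset.range (n+1), K i k * a i * a k * (2*(k:ℝ) - 2*(i:ℝ) + 2)
      = K i 0 * a i * a 0 * (2*(0:ℝ) - 2*(i:ℝ) + 2)
        + ∑ k ∈ Icc 1 n, K i k * a i * a k * (2*(k:ℝ) - 2*(i:ℝ) + 2) := by
    intro i _
    rw [Finset.range_eq_Ico, Finset.sum_eq_sum_Ico_succ_bot (Nat.succ_pos n),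
      Nat.succ_eq_add_one, Finset.Ico_add_one_right_eq_Icc]
    norm_num
  rw [Finset.sum_congr rfl hsplit, Finset.sum_add_distrib]
  have h0 : ∑ i ∈ Icc 1 (n+1), K i 0 * a i * a 0 * (2*(0:ℝ) - 2*(i:ℝ) + 2) ≤ 0 := by
    refine Finset.sum_nonpos fun i hi => ?_
    obtain ⟨hi1, hi2⟩ := Finset.mem_Icc.mp hi
    have hai := ha i (by omega)
    have ha0 := ha 0 (by omega)
    have hcoef : 2*(0:ℝ) - 2*(i:ℝ) + 2 ≤ 0 := by
      have : (1:ℝ) ≤ (i:ℝ) := by exact_mod_cast hi1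
      linarith
    have : 0 ≤ K i 0 * a i * a 0 := mul_nonneg (mul_nonneg (hKnn i 0) hai) ha0
    exact mul_nonpos_of_nonneg_of_nonpos this hcoef
  -- main part: E + F
  have hmain : ∑ i ∈ Icc 1 (n+1), ∑ k ∈ Icc 1 n,
      K i k * a i * a k * (2*(k:ℝ) - 2*(i:ℝ) + 2) ≤ 2 * C * M^2 := by
    have hEF : ∀ i ∈ Icc 1 (n+1), ∀ k ∈ Icc 1 n,
        K i k * a i * a k * (2*(k:ℝ) - 2*(i:ℝ) + 2)
        = K i k * a i * a k * (2*(k:ℝ) - 2*(i:ℝ)) + 2 * (K i k * a i * a k) :=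
      fun i _ k _ => by ring
    rw [Finset.sum_congr rfl fun i hi =>
          Finset.sum_congr rfl fun k hk => hEF i hi k hk]
    rw [Finset.sum_congr rfl fun i (hi : i ∈ Icc 1 (n+1)) =>
          (Finset.sum_add_distrib :
            ∑ k ∈ Icc 1 n, _ = _), Finset.sum_add_distrib]
    have hE : ∑ i ∈ Icc 1 (n+1), ∑ k ∈ Icc 1 n,
        K i k * a i * a k * (2*(k:ℝ) - 2*(i:ℝ)) ≤ 0 := by
      rw [Finset.sum_Icc_succ_top (by omega : 1 ≤ n+1)]
      have hzero : ∑ i ∈ Icc 1 n, ∑ k ∈ Icc 1 n,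
          K i k * a i * a k * (2*(k:ℝ) - 2*(i:ℝ)) = 0 := by
        have hswap := Finset.sum_comm (s := Icc 1 n) (t := Icc 1 n)
          (f := fun i k => K i k * a i * a k * (2*(k:ℝ) - 2*(i:ℝ)))
        have hneg : ∑ i ∈ Icc 1 n, ∑ k ∈ Icc 1 n,
            K k i * a k * a i * (2*(i:ℝ) - 2*(k:ℝ))
            = - ∑ i ∈ Icc 1 n, ∑ k ∈ Icc 1 n,
                K i k * a i * a k * (2*(k:ℝ) - 2*(i:ℝ)) := by
          rw [← Finset.sum_neg_distrib]
          refine Finset.sum_congr rfl fun i hi => ?_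
          rw [← Finset.sum_neg_distrib]
          refine Finset.sum_congr rfl fun k hk => ?_
          rw [hKsym k i (Finset.mem_Icc.mp hk).1 (Finset.mem_Icc.mp hi).1]
          ring
        have : ∑ i ∈ Icc 1 n, ∑ k ∈ Icc 1 n,
            K i k * a i * a k * (2*(k:ℝ) - 2*(i:ℝ))
            = - ∑ i ∈ Icc 1 n, ∑ k ∈ Icc 1 n,
                K i k * a i * a k * (2*(k:ℝ) - 2*(i:ℝ)) := by
          nth_rewrite 1 [hswap]; rw [← hneg]
        linarith
      rw [hzero, zero_add]
      refine Finset.sum_nonpos fun k hk => ?_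
      obtain ⟨hk1, hk2⟩ := Finset.mem_Icc.mp hk
      have hak := ha k (by omega)
      have han := ha (n+1) le_rfl
      have hcoef : 2*(k:ℝ) - 2*((n+1:ℕ):ℝ) ≤ 0 := by
        have : (k:ℝ) ≤ (n:ℝ) := by exact_mod_cast hk2
        push_cast; linarith
      have : 0 ≤ K (n+1) k * a (n+1) * a k :=
        mul_nonneg (mul_nonneg (hKnn (n+1) k) han) hak
      exact mul_nonpos_of_nonneg_of_nonpos this hcoef
    have hF : ∑ i ∈ Icc 1 (n+1), ∑ k ∈ Icc 1 n, 2 * (K i k * a i * a k)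
        ≤ 2 * C * M^2 := by
      have step1 : ∑ i ∈ Icc 1 (n+1), ∑ k ∈ Icc 1 n, 2 * (K i k * a i * a k)
          ≤ ∑ i ∈ Icc 1 (n+1), ∑ k ∈ Icc 1 n,
              2 * C * ((i:ℝ)^2 * a i) * ((k:ℝ)^2 * a k) := by
        refine Finset.sum_le_sum fun i hi => Finset.sum_le_sum fun k hk => ?_
        obtain ⟨hi1, hi2⟩ := Finset.mem_Icc.mp hi
        obtain ⟨hk1, hk2⟩ := Finset.mem_Icc.mp hk
        have hai := ha i (by omega)
        have hak := ha k (by omega)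
        have hb := hKb i k hi1 hk1
        have : K i k * a i * a k ≤ (C * (i:ℝ)^2 * (k:ℝ)^2) * (a i * a k) := by
          have haa : 0 ≤ a i * a k := mul_nonneg hai hak
          nlinarith [hKnn i k]
        nlinarith
      refine step1.trans ?_
      have heq : ∑ i ∈ Icc 1 (n+1), ∑ k ∈ Icc 1 n,
            2 * C * ((i:ℝ)^2 * a i) * ((k:ℝ)^2 * a k)
          = 2 * C * ((∑ i ∈ Icc 1 (n+1), (i:ℝ)^2 * a i)
              * (∑ k ∈ Icc 1 n, (k:ℝ)^2 * a k)) := by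
        rw [Finset.sum_mul_sum, Finset.mul_sum]
        refine Finset.sum_congr rfl fun i _ => ?_
        rw [Finset.mul_sum]
        exact Finset.sum_congr rfl fun k _ => by ring
      rw [heq]
      have hterm : ∀ j ∈ Finset.range (n+2), 0 ≤ (j:ℝ)^2 * a j := by
        intro j hj
        have hj' : j ≤ n + 1 := by have := Finset.mem_range.mp hj; omega
        have := ha j hj'
        positivity
      have hP : ∑ i ∈ Icc 1 (n+1), (i:ℝ)^2 * a i ≤ M := by
        refine Finset.sum_le_sum_of_subset_of_nonneg ?_ fun j hj _ => hterm j hj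
        intro x hx
        simp only [Finset.mem_Icc] at hx
        exact Finset.mem_range.mpr (by omega)
      have hQ : ∑ k ∈ Icc 1 n, (k:ℝ)^2 * a k ≤ M := by
        refine Finset.sum_le_sum_of_subset_of_nonneg ?_ fun j hj _ => hterm j hj
        intro x hx
        simp only [Finset.mem_Icc] at hx
        exact Finset.mem_range.mpr (by omega)
      have hPnn : 0 ≤ ∑ i ∈ Icc 1 (n+1), (i:ℝ)^2 * a i :=
        Finset.sum_nonneg fun i hi => by
          have := ha i (by exact (Finset.mem_Icc.mp hi).2); positivity
      have hQnn : 0 ≤ ∑ k ∈ Icc 1 n, (k:ℝ)^2 * a k :=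
        Finset.sum_nonneg fun k hk => by
          have := ha k (by have := (Finset.mem_Icc.mp hk).2; omega); positivity
      nlinarith [mul_le_mul hP hQ hQnn hMnn]
    linarith
  linarith


lemma M_hasDeriv (K : ℕ → ℕ → ℝ) (n : ℕ) (c : ℕ → ℝ → ℝ)
    (hsol : IsTruncEDGSol K (n+1) c (Set.Ici 0)) (x : ℝ) (hx : x ∈ Set.Ici (0:ℝ)) :
    HasDerivAt (fun t => ∑ j ∈ Finset.range (n+2), (j:ℝ)^2 * c j t)
      (∑ i ∈ Icc 1 (n+1), ∑ k ∈ Finset.range (n+1),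
        K i k * c i x * c k x * (2*(k:ℝ) - 2*(i:ℝ) + 2)) x := by
  obtain ⟨h0, hmid, htop⟩ := hsol x hx
  classical
  set d : ℕ → ℝ := fun j =>
    if j = 0 then
      c 1 x * truncS K (n+1) (fun k => c k x) 1
        - c 0 x * truncSbar K (n+1) (fun k => c k x) 0
    else if j = n+1 then
      - c (n+1) x * truncS K (n+1) (fun k => c k x) (n+1)
        + c n x * truncSbar K (n+1) (fun k => c k x) n
    else
      c (j+1) x * truncS K (n+1) (fun k => c k x) (j+1)
        - c j x * truncS K (n+1) (fun k => c k x) j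
        - c j x * truncSbar K (n+1) (fun k => c k x) j
        + c (j-1) x * truncSbar K (n+1) (fun k => c k x) (j-1) with hd
  have hder : HasDerivAt (fun t => ∑ j ∈ Finset.range (n+2), (j:ℝ)^2 * c j t)
      (∑ j ∈ Finset.range (n+2), (j:ℝ)^2 * d j) x := by
    refine HasDerivAt.fun_sum fun j hj => ?_
    have hjle : j ≤ n + 1 := by have := Finset.mem_range.mp hj; omega
    by_cases hj0 : j = 0
    · subst hj0
      refine HasDerivAt.const_mul _ ?_
      simp only [hd, if_pos rfl]
      exact h0
    · by_cases hjN : j = n+1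
      · subst hjN
        refine HasDerivAt.const_mul _ ?_
        simp only [hd, if_neg (by omega : ¬ (n+1 = 0)), if_pos rfl]
        have := htop
        simpa [Nat.add_sub_cancel] using this
      · refine HasDerivAt.const_mul _ ?_
        simp only [hd, if_neg hj0, if_neg hjN]
        have := hmid j (by omega) (by simp [Nat.add_sub_cancel]; omega)
        exact this
  have hsum : ∑ j ∈ Finset.range (n+2), (j:ℝ)^2 * d j
      = ∑ i ∈ Icc 1 (n+1), ∑ k ∈ Finset.range (n+1),
          K i k * c i x * c k x * (2*(k:ℝ) - 2*(i:ℝ) + 2) := by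
    rw [Finset.range_eq_Ico, Finset.sum_eq_sum_Ico_succ_bot (by omega : 0 < n+2),
      show n + 2 = (n+1) + 1 from rfl, Finset.Ico_add_one_right_eq_Icc, Finset.sum_Icc_succ_top (by omega : 1 ≤ n+1)]
    have hmidval : ∀ j ∈ Icc 1 n, (j:ℝ)^2 * d j = (j:ℝ)^2 *
        (c (j+1) x * truncS K (n+1) (fun k => c k x) (j+1)
          - c j x * truncS K (n+1) (fun k => c k x) j
          - c j x * truncSbar K (n+1) (fun k => c k x) j
          + c (j-1) x * truncSbar K (n+1) (fun k => c k x) (j-1)) := by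
      intro j hjm
      obtain ⟨hj1, hj2⟩ := Finset.mem_Icc.mp hjm
      rw [hd]
      simp only [if_neg (by omega : ¬ j = 0), if_neg (by omega : ¬ j = n+1)]
    rw [Finset.sum_congr rfl hmidval]
    have hdN : d (n+1) = - c (n+1) x * truncS K (n+1) (fun k => c k x) (n+1)
        + c n x * truncSbar K (n+1) (fun k => c k x) n := by
      simp [hd]
    rw [hdN]
    have idt := moment_identity K n (fun k => c k x)
    push_cast at idt ⊢
    linarith [idt]
  rw [hsum] at hder
  exact hder


theorem truncated_second_moment_local_bound (C : ℝ) (hC : 0 < C) :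
    ∃ C'' > (0 : ℝ), ∀ (K : ℕ → ℕ → ℝ) (N : ℕ) (c : ℕ → ℝ → ℝ),
      1 ≤ N →
      (∀ j k, 0 ≤ K j k) → (∀ j, K 0 j = 0) →
      (∀ j k, 1 ≤ j → 1 ≤ k → K j k = K k j) →
      (∀ j k : ℕ, 1 ≤ j → 1 ≤ k → K j k ≤ C * (j : ℝ) ^ 2 * (k : ℝ) ^ 2) →
      (∀ t ≥ (0 : ℝ), ∀ j ≤ N, 0 ≤ c j t) →
      IsTruncEDGSol K N c (Set.Ici 0) →
      0 < ∑ j ∈ Finset.range (N + 1), (j : ℝ) ^ 2 * c j 0 →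
      ∀ t ≥ (0 : ℝ),
        t < 1 / (2 * C'' * ∑ j ∈ Finset.range (N + 1), (j : ℝ) ^ 2 * c j 0) →
        ∑ j ∈ Finset.range (N + 1), (j : ℝ) ^ 2 * c j t ≤
          1 / (1 / (∑ j ∈ Finset.range (N + 1), (j : ℝ) ^ 2 * c j 0) - 2 * C'' * t) := by
  refine ⟨2 * C, by positivity, ?_⟩
  intro K N c hN hKnn hK0 hKsym hKb hcnn hsol hM0 t ht htlt
  obtain ⟨n, rfl⟩ : ∃ n, N = n + 1 := ⟨N - 1, by omega⟩
  set M : ℝ → ℝ := fun x => ∑ j ∈ Finset.range (n+1+1), (j:ℝ)^2 * c j x with hMdef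
  have hM0pos : 0 < M 0 := hM0
  set M0 : ℝ := M 0 with hM0def
  -- key: 4*C*t < M0⁻¹
  have hdenpos : (0:ℝ) < M0⁻¹ - 2 * (2*C) * t := by
    have h1 : t * (2 * (2*C) * M0) < 1 := by
      rw [lt_div_iff₀ (by positivity)] at htlt
      exact htlt
    have hinv : M0⁻¹ * M0 = 1 := inv_mul_cancel₀ (ne_of_gt hM0pos)
    nlinarith [hM0pos]
  set B : ℝ → ℝ := fun x => (M0⁻¹ - 2 * (2*C) * x)⁻¹ with hBdef
  set B' : ℝ → ℝ := fun x => (2 * (2*C)) * ((M0⁻¹ - 2 * (2*C) * x)⁻¹)^2 with hB'def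
  have hgpos : ∀ x ∈ Set.Icc (0:ℝ) t, (0:ℝ) < M0⁻¹ - 2 * (2*C) * x := by
    intro x hx
    have h2 : 2 * (2*C) * x ≤ 2 * (2*C) * t :=
      mul_le_mul_of_nonneg_left hx.2 (by positivity)
    linarith
  have hBderiv : ∀ x ∈ Set.Icc (0:ℝ) t, HasDerivAt B (B' x) x := by
    intro x hx
    have hg : HasDerivAt (fun y : ℝ => M0⁻¹ - 2 * (2*C) * y) (-(2 * (2*C))) x := by
      simpa using ((hasDerivAt_id x).const_mul (2 * (2*C))).const_sub M0⁻¹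
    have := hg.inv (ne_of_gt (hgpos x hx))
    refine this.congr_deriv ?_
    rw [hB'def]
    have hne := ne_of_gt (hgpos x hx)
    field_simp
  have hMderiv : ∀ x ∈ Set.Ici (0:ℝ), HasDerivAt M
      (∑ i ∈ Icc 1 (n+1), ∑ k ∈ Finset.range (n+1),
        K i k * c i x * c k x * (2*(k:ℝ) - 2*(i:ℝ) + 2)) x := by
    intro x hx
    exact M_hasDeriv K n c hsol x hx
  set F' : ℝ → ℝ := fun x => ∑ i ∈ Icc 1 (n+1), ∑ k ∈ Finset.range (n+1),
      K i k * c i x * c k x * (2*(k:ℝ) - 2*(i:ℝ) + 2) with hF'def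
  have key : ∀ x ∈ Set.Icc (0:ℝ) t, M x ≤ B x := by
    refine image_le_of_deriv_right_lt_deriv_boundary'
      (f := M) (f' := F') (a := 0) (b := t) (B := B) (B' := B') ?_ ?_ ?_ ?_ ?_ ?_
    · intro x hx
      exact (hMderiv x hx.1).continuousAt.continuousWithinAt
    · intro x hx
      exact (hMderiv x hx.1).hasDerivWithinAt
    · have : B 0 = M0 := by simp [hBdef]
      rw [this]
    · intro x hx
      exact (hBderiv x hx).continuousAt.continuousWithinAt
    · intro x hx
      exact (hBderiv x (Set.Ico_subset_Icc_self hx)).hasDerivWithinAt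
    · intro x hx hMB
      have hxIcc : x ∈ Set.Icc (0:ℝ) t := Set.Ico_subset_Icc_self hx
      have hbound : F' x ≤ 2 * C * (M x)^2 :=
        moment_bound C hC K n hKnn hKsym hKb (fun k => c k x)
          (fun j hj => hcnn x hx.1 j hj)
      have hBpos : 0 < B x := by
        rw [hBdef]
        exact inv_pos.mpr (hgpos x hxIcc)
      have hB'val : B' x = 2 * (2*C) * (B x)^2 := rfl
      rw [hMB] at hbound
      calc F' x ≤ 2 * C * (B x)^2 := hbound
        _ < 2 * (2*C) * (B x)^2 := by nlinarith [sq_nonneg (B x), pow_pos hBpos 2]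
        _ = B' x := rfl
  have := key t (Set.mem_Icc.mpr ⟨ht, le_rfl⟩)
  calc ∑ j ∈ Finset.range (n+1+1), (j:ℝ)^2 * c j t = M t := rfl
    _ ≤ B t := this
    _ = 1 / (1 / M0 - 2 * (2*C) * t) := by rw [hBdef, one_div, one_div]
end
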